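/- (Counterembedding) Let 𝔄 be an assignment structure, Ω a valuation (independent of the control variable ℓ), φ an Lμ_𝒱-formula, ϑ a dictionary compatible with φ, and D ⊆ 𝒮 such that for every X ∈ 𝒱̄ with ϑ(X) = 1 one has Ω⟦ℓ:=c_X⟧(D) = Ω(X). Then the μ-calculus semantics of φ equals the game-logic semantics of its translated game applied to D: Ω⟦φ⟧_μ = Ω⟦φ^ϑ⟧(D). -/

import Mathlib

open FirstOrder Set

namespace GLMu

/-! ## Barred propositional variables -/

/-- Barred propositional variables: `Sum.inl X` is `X`, `Sum.inr X` is `X̄`. -/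
def bar {V : Type*} : V ⊕ V → V ⊕ V := Sum.elim Sum.inr Sum.inl

def unbar {V : Type*} : V ⊕ V → V := Sum.elim id id

/-! ## First-order literals -/

/-- First-order literals with equality: atomic formulas and their negations. -/
inductive Lit (L : Language) (𝒳 : Type*) where
  | eq (t₁ t₂ : L.Term 𝒳)
  | ne (t₁ t₂ : L.Term 𝒳)
  | rel {n : ℕ} (R : L.Relations n) (ts : Fin n → L.Term 𝒳)
  | nrel {n : ℕ} (R : L.Relations n) (ts : Fin n → L.Term 𝒳)

namespace Lit

variable {L : Language} {𝒳 : Type*}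

/-- Negation of a literal. -/
def neg : Lit L 𝒳 → Lit L 𝒳
  | .eq t₁ t₂ => .ne t₁ t₂
  | .ne t₁ t₂ => .eq t₁ t₂
  | .rel R ts => .nrel R ts
  | .nrel R ts => .rel R ts

variable {M : Type*} [L.Structure M]

/-- Semantics of a literal: the set of states in which it is true. -/
def sem : Lit L 𝒳 → Set (𝒳 → M)
  | .eq t₁ t₂ => {ω | t₁.realize ω = t₂.realize ω}
  | .ne t₁ t₂ => {ω | t₁.realize ω ≠ t₂.realize ω}
  | .rel R ts => {ω | Language.Structure.RelMap R (fun i => (ts i).realize ω)}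
  | .nrel R ts => {ω | ¬ Language.Structure.RelMap R (fun i => (ts i).realize ω)}

end Lit

/-- The set of object variables occurring in a term. -/
def tvars {L : Language} {𝒳 : Type*} : L.Term 𝒳 → Set 𝒳
  | .var x => {x}
  | .func _ ts => ⋃ i, tvars (ts i)

/-- The set of object variables occurring in a literal. -/
def Lit.ovars {L : Language} {𝒳 : Type*} : Lit L 𝒳 → Set 𝒳
  | .eq t₁ t₂ => tvars t₁ ∪ tvars t₂
  | .ne t₁ t₂ => tvars t₁ ∪ tvars t₂
  | .rel _ ts => ⋃ i, tvars (ts i)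
  | .nrel _ ts => ⋃ i, tvars (ts i)

/-! ## Syntax of the first-order modal μ-calculus -/

/-- Formulas of the first-order modal μ-calculus `Lμ_𝒱` (raw syntax). -/
inductive MuF (L : Language) (𝒳 Act V : Type*) where
  | lit (p : Lit L 𝒳)
  | var (X : V ⊕ V)
  | or (φ₁ φ₂ : MuF L 𝒳 Act V)
  | and (φ₁ φ₂ : MuF L 𝒳 Act V)
  | dia (a : Act) (φ : MuF L 𝒳 Act V)
  | box (a : Act) (φ : MuF L 𝒳 Act V)
  | mu (X : V ⊕ V) (φ : MuF L 𝒳 Act V)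
  | nu (X : V ⊕ V) (φ : MuF L 𝒳 Act V)

namespace MuF

variable {L : Language} {𝒳 Act V : Type*}

/-- The propositional variables (in `𝒱̄`) mentioned anywhere in a formula. -/
def mentions : MuF L 𝒳 Act V → Set (V ⊕ V)
  | .lit _ => ∅
  | .var X => {X}
  | .or φ ψ => φ.mentions ∪ ψ.mentions
  | .and φ ψ => φ.mentions ∪ ψ.mentions
  | .dia _ φ => φ.mentions
  | .box _ φ => φ.mentions
  | .mu X φ => {X} ∪ φ.mentions
  | .nu X φ => {X} ∪ φ.mentions

/-- Well-formedness: in `μX.ψ` and `νX.ψ` the body `ψ` may not mention `X̄`.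
This is the constraint built into the grammar of `Lμ_𝒱`. -/
def WF : MuF L 𝒳 Act V → Prop
  | .lit _ => True
  | .var _ => True
  | .or φ ψ => φ.WF ∧ ψ.WF
  | .and φ ψ => φ.WF ∧ ψ.WF
  | .dia _ φ => φ.WF
  | .box _ φ => φ.WF
  | .mu X φ => bar X ∉ φ.mentions ∧ φ.WF
  | .nu X φ => bar X ∉ φ.mentions ∧ φ.WF

/-- The free propositional variables of a formula. -/
def freeVars : MuF L 𝒳 Act V → Set (V ⊕ V)
  | .lit _ => ∅
  | .var X => {X}
  | .or φ ψ => φ.freeVars ∪ ψ.freeVars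
  | .and φ ψ => φ.freeVars ∪ ψ.freeVars
  | .dia _ φ => φ.freeVars
  | .box _ φ => φ.freeVars
  | .mu X φ => φ.freeVars \ {X, bar X}
  | .nu X φ => φ.freeVars \ {X, bar X}

/-- The propositional variables bound by a fixpoint operator somewhere in a formula. -/
def boundVars : MuF L 𝒳 Act V → Set (V ⊕ V)
  | .lit _ => ∅
  | .var _ => ∅
  | .or φ ψ => φ.boundVars ∪ ψ.boundVars
  | .and φ ψ => φ.boundVars ∪ ψ.boundVars
  | .dia _ φ => φ.boundVars
  | .box _ φ => φ.boundVars
  | .mu X φ => {X} ∪ φ.boundVars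
  | .nu X φ => {X} ∪ φ.boundVars

/-- The list of bound propositional variables, with multiplicity. -/
def boundList : MuF L 𝒳 Act V → List (V ⊕ V)
  | .lit _ => []
  | .var _ => []
  | .or φ ψ => φ.boundList ++ ψ.boundList
  | .and φ ψ => φ.boundList ++ ψ.boundList
  | .dia _ φ => φ.boundList
  | .box _ φ => φ.boundList
  | .mu X φ => X :: φ.boundList
  | .nu X φ => X :: φ.boundList

/-- Every propositional variable is bound at most once. -/
def BoundOnce (φ : MuF L 𝒳 Act V) : Prop := (φ.boundList.map unbar).Nodup

/-- The transition symbols occurring in a formula. -/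
def acts : MuF L 𝒳 Act V → Set Act
  | .lit _ => ∅
  | .var _ => ∅
  | .or φ ψ => φ.acts ∪ ψ.acts
  | .and φ ψ => φ.acts ∪ ψ.acts
  | .dia a φ => {a} ∪ φ.acts
  | .box a φ => {a} ∪ φ.acts
  | .mu _ φ => φ.acts
  | .nu _ φ => φ.acts

/-- The complement `φ̄` of an `Lμ_𝒱`-formula. -/
def compl : MuF L 𝒳 Act V → MuF L 𝒳 Act V
  | .lit p => .lit p.neg
  | .var X => .var (bar X)
  | .or φ ψ => .and φ.compl ψ.compl
  | .and φ ψ => .or φ.compl ψ.compl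
  | .dia a φ => .box a φ.compl
  | .box a φ => .dia a φ.compl
  | .mu X φ => .nu (bar X) φ.compl
  | .nu X φ => .mu (bar X) φ.compl

/-- Implication `φ → ψ`, an abbreviation for `φ̄ ∨ ψ`. -/
def imp (φ ψ : MuF L 𝒳 Act V) : MuF L 𝒳 Act V := .or φ.compl ψ

/-- Bi-implication `φ ↔ ψ`. -/
def iff (φ ψ : MuF L 𝒳 Act V) : MuF L 𝒳 Act V := .and (imp φ ψ) (imp ψ φ)

variable [DecidableEq V]

/-- Substitution `φ[ψ/X]` of `ψ` for all free occurrences of the propositional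
variable `X` (and of `ψ̄` for all free occurrences of its complement). -/
def subst (X : V ⊕ V) (ψ : MuF L 𝒳 Act V) : MuF L 𝒳 Act V → MuF L 𝒳 Act V
  | .lit p => .lit p
  | .var Y => if Y = X then ψ else if Y = bar X then ψ.compl else .var Y
  | .or φ₁ φ₂ => .or (subst X ψ φ₁) (subst X ψ φ₂)
  | .and φ₁ φ₂ => .and (subst X ψ φ₁) (subst X ψ φ₂)
  | .dia a φ => .dia a (subst X ψ φ)
  | .box a φ => .box a (subst X ψ φ)
  | .mu Y φ => if X = Y ∨ X = bar Y then .mu Y φ else .mu Y (subst X ψ φ)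
  | .nu Y φ => if X = Y ∨ X = bar Y then .nu Y φ else .nu Y (subst X ψ φ)

/-- `X` is free for `ψ` in `φ`: no free occurrence of `X` in `φ` is in the scope of a
fixpoint operator binding a free propositional variable of `ψ`. -/
def FreeFor (X : V ⊕ V) (ψ : MuF L 𝒳 Act V) : MuF L 𝒳 Act V → Prop
  | .lit _ => True
  | .var _ => True
  | .or φ₁ φ₂ => FreeFor X ψ φ₁ ∧ FreeFor X ψ φ₂
  | .and φ₁ φ₂ => FreeFor X ψ φ₁ ∧ FreeFor X ψ φ₂
  | .dia _ φ => FreeFor X ψ φ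
  | .box _ φ => FreeFor X ψ φ
  | .mu Y φ => X = Y ∨ X = bar Y ∨
      (((X ∈ φ.freeVars ∨ bar X ∈ φ.freeVars) → (Y ∉ ψ.freeVars ∧ bar Y ∉ ψ.freeVars)) ∧
        FreeFor X ψ φ)
  | .nu Y φ => X = Y ∨ X = bar Y ∨
      (((X ∈ φ.freeVars ∨ bar X ∈ φ.freeVars) → (Y ∉ ψ.freeVars ∧ bar Y ∉ ψ.freeVars)) ∧
        FreeFor X ψ φ)

end MuF

/-! ## Semantics of the first-order modal μ-calculus -/

section MuSem

variable {L : Language} {𝒳 Act V : Type*} {M : Type*} [L.Structure M] [DecidableEq V]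

/-- The extension of a valuation `Ω : 𝒱 → 𝒫(𝒮)` to barred propositional variables,
with `Ω(X̄) = 𝒮 ∖ Ω(X)`. -/
def barVal (Ω : V → Set (𝒳 → M)) : V ⊕ V → Set (𝒳 → M) :=
  Sum.elim Ω (fun x => (Ω x)ᶜ)

/-- The modified valuation `Ω[E/X]` for `X ∈ 𝒱̄`. -/
def modif (Ω : V → Set (𝒳 → M)) : V ⊕ V → Set (𝒳 → M) → V → Set (𝒳 → M)
  | .inl x, E => Function.update Ω x E
  | .inr x, E => Function.update Ω x Eᶜ

variable (tr : Act → (𝒳 → M) → (𝒳 → M) → Prop)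

/-- Denotational semantics of `Lμ_𝒱`-formulas. -/
def MuF.sem : MuF L 𝒳 Act V → (V → Set (𝒳 → M)) → Set (𝒳 → M)
  | .lit p, _ => p.sem
  | .var X, Ω => barVal Ω X
  | .or φ ψ, Ω => φ.sem Ω ∪ ψ.sem Ω
  | .and φ ψ, Ω => φ.sem Ω ∩ ψ.sem Ω
  | .dia a φ, Ω => {ω | ∃ ν, tr a ω ν ∧ ν ∈ φ.sem Ω}
  | .box a φ, Ω => {ω | ∀ ν, tr a ω ν → ν ∈ φ.sem Ω}
  | .mu X φ, Ω => ⋂₀ {D | φ.sem (modif Ω X D) ⊆ D}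
  | .nu X φ, Ω => ⋃₀ {D | D ⊆ φ.sem (modif Ω X D)}

end MuSem

/-! ## Syntax of first-order game logic -/

universe uL vL u𝒳 uA uV

mutual
/-- Formulas of first-order game logic `GL_𝒱`. -/
inductive GLF (L : Language) (𝒳 : Type u𝒳) (Act : Type uA) (V : Type uV) where
  | lit (p : Lit L 𝒳)
  | var (X : V)
  | not (φ : GLF L 𝒳 Act V)
  | or (φ₁ φ₂ : GLF L 𝒳 Act V)
  | dia (γ : GLG L 𝒳 Act V) (φ : GLF L 𝒳 Act V)

/-- Games of first-order game logic `GL_𝒱`. -/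
inductive GLG (L : Language) (𝒳 : Type u𝒳) (Act : Type uA) (V : Type uV) where
  | act (a : Act)
  | test (φ : GLF L 𝒳 Act V)
  | choice (γ₁ γ₂ : GLG L 𝒳 Act V)
  | seq (γ₁ γ₂ : GLG L 𝒳 Act V)
  | star (γ : GLG L 𝒳 Act V)
  | dual (γ : GLG L 𝒳 Act V)
end

section GLDefs

variable {L : Language} {𝒳 Act V : Type*}

mutual
/-- Propositional variables occurring in a game-logic formula. -/
def GLF.pvars : GLF L 𝒳 Act V → Set V
  | .lit _ => ∅
  | .var X => {X}
  | .not φ => φ.pvars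
  | .or φ ψ => φ.pvars ∪ ψ.pvars
  | .dia γ φ => γ.pvars ∪ φ.pvars

/-- Propositional variables occurring in a game. -/
def GLG.pvars : GLG L 𝒳 Act V → Set V
  | .act _ => ∅
  | .test φ => φ.pvars
  | .choice γ₁ γ₂ => γ₁.pvars ∪ γ₂.pvars
  | .seq γ₁ γ₂ => γ₁.pvars ∪ γ₂.pvars
  | .star γ => γ.pvars
  | .dual γ => γ.pvars
end

mutual
/-- Transition symbols occurring in a game-logic formula. -/
def GLF.acts : GLF L 𝒳 Act V → Set Act
  | .lit _ => ∅
  | .var _ => ∅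
  | .not φ => φ.acts
  | .or φ ψ => φ.acts ∪ ψ.acts
  | .dia γ φ => γ.acts ∪ φ.acts

/-- Transition symbols occurring in a game. -/
def GLG.acts : GLG L 𝒳 Act V → Set Act
  | .act a => {a}
  | .test φ => φ.acts
  | .choice γ₁ γ₂ => γ₁.acts ∪ γ₂.acts
  | .seq γ₁ γ₂ => γ₁.acts ∪ γ₂.acts
  | .star γ => γ.acts
  | .dual γ => γ.acts
end

variable [DecidableEq V]

mutual
/-- Substitution of the game-logic formula `χ` for the propositional variable `X`
(everywhere, including inside tests of games). -/
def GLF.psub (X : V) (χ : GLF L 𝒳 Act V) : GLF L 𝒳 Act V → GLF L 𝒳 Act V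
  | .lit p => .lit p
  | .var Y => if Y = X then χ else .var Y
  | .not φ => .not (GLF.psub X χ φ)
  | .or φ ψ => .or (GLF.psub X χ φ) (GLF.psub X χ ψ)
  | .dia γ φ => .dia (GLG.psub X χ γ) (GLF.psub X χ φ)

def GLG.psub (X : V) (χ : GLF L 𝒳 Act V) : GLG L 𝒳 Act V → GLG L 𝒳 Act V
  | .act a => .act a
  | .test φ => .test (GLF.psub X χ φ)
  | .choice γ₁ γ₂ => .choice (GLG.psub X χ γ₁) (GLG.psub X χ γ₂)
  | .seq γ₁ γ₂ => .seq (GLG.psub X χ γ₁) (GLG.psub X χ γ₂)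
  | .star γ => .star (GLG.psub X χ γ)
  | .dual γ => .dual (GLG.psub X χ γ)
end

/-- Implication in game logic. -/
def GLF.gimp (φ ψ : GLF L 𝒳 Act V) : GLF L 𝒳 Act V := .or (.not φ) ψ

/-- Conjunction in game logic. -/
def GLF.gand (φ ψ : GLF L 𝒳 Act V) : GLF L 𝒳 Act V := .not (.or (.not φ) (.not ψ))

/-- Bi-implication in game logic. -/
def GLF.giff (φ ψ : GLF L 𝒳 Act V) : GLF L 𝒳 Act V := GLF.gand (GLF.gimp φ ψ) (GLF.gimp ψ φ)

end GLDefs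

/-! ## Semantics of first-order game logic -/

section GLSem

variable {L : Language} {𝒳 Act V : Type*} {M : Type*} [L.Structure M]
variable (tr : Act → (𝒳 → M) → (𝒳 → M) → Prop)

mutual
/-- Denotational semantics of game-logic formulas. -/
def GLF.sem : GLF L 𝒳 Act V → (V → Set (𝒳 → M)) → Set (𝒳 → M)
  | .lit p, _ => p.sem
  | .var X, Ω => Ω X
  | .not φ, Ω => (φ.sem Ω)ᶜ
  | .or φ ψ, Ω => φ.sem Ω ∪ ψ.sem Ω
  | .dia γ φ, Ω => γ.sem Ω (φ.sem Ω)

/-- Denotational semantics of games: `γ.sem tr Ω D` is the set of states from which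
Angel has a winning strategy in `γ` to reach `D`. -/
def GLG.sem : GLG L 𝒳 Act V → (V → Set (𝒳 → M)) → Set (𝒳 → M) → Set (𝒳 → M)
  | .act a, _, D => {ω | ∃ ν, tr a ω ν ∧ ν ∈ D}
  | .test φ, Ω, D => φ.sem Ω ∩ D
  | .choice γ₁ γ₂, Ω, D => γ₁.sem Ω D ∪ γ₂.sem Ω D
  | .seq γ₁ γ₂, Ω, D => γ₁.sem Ω (γ₂.sem Ω D)
  | .star γ, Ω, D => ⋂₀ {Z | D ∪ γ.sem Ω Z ⊆ Z}
  | .dual γ, Ω, D => (γ.sem Ω Dᶜ)ᶜ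
end

end GLSem


/-! ## The translation ♯ from game logic into the μ-calculus -/

section Sharp

variable {L : Language} {𝒳 Act V : Type*}

/-- The translation `♯` of `GL_𝒱`-formulas into `Lμ_𝒱`-formulas, as a relation
(the clause for `⟨γ*⟩φ` chooses a fresh propositional variable `X`). -/
inductive Sharp : GLF L 𝒳 Act V → MuF L 𝒳 Act V → Prop
  | lit (p) : Sharp (.lit p) (.lit p)
  | var (X) : Sharp (.var X) (.var (Sum.inl X))
  | not {φ m} : Sharp φ m → Sharp (.not φ) m.compl
  | or {φ₁ φ₂ m₁ m₂} : Sharp φ₁ m₁ → Sharp φ₂ m₂ → Sharp (.or φ₁ φ₂) (.or m₁ m₂)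
  | act {a φ m} : Sharp φ m → Sharp (.dia (.act a) φ) (.dia a m)
  | test {φ₁ φ₂ m₁ m₂} : Sharp φ₁ m₁ → Sharp φ₂ m₂ → Sharp (.dia (.test φ₁) φ₂) (.and m₁ m₂)
  | choice {γ₁ γ₂ φ m₁ m₂} : Sharp (.dia γ₁ φ) m₁ → Sharp (.dia γ₂ φ) m₂ →
      Sharp (.dia (.choice γ₁ γ₂) φ) (.or m₁ m₂)
  | seq {γ₁ γ₂ φ m} : Sharp (.dia γ₁ (.dia γ₂ φ)) m → Sharp (.dia (.seq γ₁ γ₂) φ) m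
  | dual {γ φ m} : Sharp (.dia γ (.not φ)) m → Sharp (.dia (.dual γ) φ) m.compl
  | star {γ φ X m} : X ∉ φ.pvars → X ∉ γ.pvars →
      Sharp (.or φ (.dia γ (.var X))) m →
      Sharp (.dia (.star γ) φ) (.mu (Sum.inl X) m)

end Sharp

/-! ## The translation of μ-calculus formulas into games (dictionaries) -/

section Flat

variable {L : Language} {𝒳 Act V : Type*} [DecidableEq V]

/-- A barred propositional variable as a game logic formula (`X̄` is `¬X`). -/
def gvar : V ⊕ V → GLF L 𝒳 Act V := Sum.elim .var (fun x => .not (.var x))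

/-- A canonical true game-logic formula `⊤`. -/
def glTrue (ℓ : 𝒳) : GLF L 𝒳 Act V := .lit (.eq (.var ℓ) (.var ℓ))

/-- A canonical false game-logic formula `⊥`. -/
def glFalse (ℓ : 𝒳) : GLF L 𝒳 Act V := .lit (.ne (.var ℓ) (.var ℓ))

/-- The dictionary `ϑ[X]`, treating `X` (and `X̄`) as bound. -/
def dictUp (ϑ : V → Bool) (X : V ⊕ V) : V → Bool := Function.update ϑ (unbar X) true

/-- A dictionary is compatible with a formula iff it takes value `0` on all
propositional variables bound in the formula. -/
def Compat (ϑ : V → Bool) (φ : MuF L 𝒳 Act V) : Prop :=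
  ∀ X ∈ φ.boundVars, ϑ (unbar X) = false

/-- Demonic choice `γ₁ ∩ γ₂`. -/
def GLG.dchoice (γ₁ γ₂ : GLG L 𝒳 Act V) : GLG L 𝒳 Act V := .dual (.choice (.dual γ₁) (.dual γ₂))

/-- Demonic repetition `γ^×`. -/
def GLG.cross (γ : GLG L 𝒳 Act V) : GLG L 𝒳 Act V := .dual (.star (.dual γ))

/-- The translation `φ^ϑ` of an `Lμ_𝒱`-formula into a `GL_𝒱`-game, relative to a
dictionary `ϑ`, a control variable `ℓ`, constant symbols `c_X`, and the deterministic
assignment transition symbols `asn`. -/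
def trGame (ℓ : 𝒳) (c : V ⊕ V → L.Constants) (asn : 𝒳 → L.Term 𝒳 → Act) :
    MuF L 𝒳 Act V → (V → Bool) → GLG L 𝒳 Act V
  | .lit p, _ => .seq (.test (.lit p)) (.dual (.test (glFalse ℓ)))
  | .var X, ϑ =>
      if ϑ (unbar X) then .act (asn ℓ (Language.Constants.term (c X)))
      else .seq (.test (gvar X)) (.dual (.test (glFalse ℓ)))
  | .or φ ψ, ϑ => .choice (trGame ℓ c asn φ ϑ) (trGame ℓ c asn ψ ϑ)
  | .and φ ψ, ϑ => GLG.dchoice (trGame ℓ c asn φ ϑ) (trGame ℓ c asn ψ ϑ)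
  | .dia a φ, ϑ => .seq (.act a) (trGame ℓ c asn φ ϑ)
  | .box a φ, ϑ => .seq (.dual (.act a)) (trGame ℓ c asn φ ϑ)
  | .mu X φ, ϑ => .seq (.act (asn ℓ (Language.Constants.term (c X))))
      (.seq (.star (.seq (.test (.lit (.eq (.var ℓ) (Language.Constants.term (c X)))))
                         (trGame ℓ c asn φ (dictUp ϑ X))))
            (.test (.lit (.ne (.var ℓ) (Language.Constants.term (c X))))))
  | .nu X φ, ϑ => .seq (.act (asn ℓ (Language.Constants.term (c X))))
      (.seq (GLG.cross (.seq (.dual (.test (.lit (.eq (.var ℓ) (Language.Constants.term (c X))))))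
                             (trGame ℓ c asn φ (dictUp ϑ X))))
            (.dual (.test (.lit (.ne (.var ℓ) (Language.Constants.term (c X)))))))

/-- The translation `ψ♭ = ⟨ψ^η⟩⊤` of an `Lμ`-formula into a `GL`-formula,
where `η` is the dictionary that is `0` everywhere. -/
def flatF (ℓ : 𝒳) (c : V ⊕ V → L.Constants) (asn : 𝒳 → L.Term 𝒳 → Act)
    (ψ : MuF L 𝒳 Act V) : GLF L 𝒳 Act V :=
  .dia (trGame ℓ c asn ψ (fun _ => false)) (glTrue ℓ)

/-- The object variables occurring (in literals) in a μ-calculus formula. -/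
def MuF.ovars : MuF L 𝒳 Act V → Set 𝒳
  | .lit p => p.ovars
  | .var _ => ∅
  | .or φ ψ => φ.ovars ∪ ψ.ovars
  | .and φ ψ => φ.ovars ∪ ψ.ovars
  | .dia _ φ => φ.ovars
  | .box _ φ => φ.ovars
  | .mu _ φ => φ.ovars
  | .nu _ φ => φ.ovars

variable {M : Type*} [DecidableEq 𝒳]

/-- Object variable `y` is independent of transition `a` under interpretation `tr`:
whenever `(ω,ν) ∈ ⟦a⟧` then also `(ω[b/y],ν[b/y]) ∈ ⟦a⟧`. -/
def IndepAct (tr : Act → (𝒳 → M) → (𝒳 → M) → Prop) (y : 𝒳) (a : Act) : Prop :=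
  ∀ (b : M) ω ν, tr a ω ν → tr a (Function.update ω y b) (Function.update ν y b)

/-- A valuation is independent of the object variable `y`. -/
def IndepVal (y : 𝒳) (Ω : V → Set (𝒳 → M)) : Prop :=
  ∀ (X : V) (b : M) (ω : 𝒳 → M), ω ∈ Ω X ↔ Function.update ω y b ∈ Ω X

end Flat

/-! ## Signatures with deterministic and nondeterministic assignments -/

/-- Transition symbols of a signature with deterministic and nondeterministic
assignments: base symbols from `A₀`, deterministic assignments `x := θ`, and
nondeterministic assignments `x := *`. -/
inductive CAct (L : Language) (𝒳 : Type u𝒳) (A₀ : Type uA) where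
  | base (a : A₀)
  | asn (x : 𝒳) (θ : L.Term 𝒳)
  | rand (x : 𝒳)

section CActDefs

variable {L : Language} {𝒳 A₀ : Type*} [DecidableEq 𝒳]

/-- Substitution of the term `θ` for the object variable `x` in a term. -/
def tsub (x : 𝒳) (θ : L.Term 𝒳) (t : L.Term 𝒳) : L.Term 𝒳 :=
  t.subst (fun y => if y = x then θ else .var y)

/-- Swapping the object variables `x` and `y` in a term. -/
def tswap (x y : 𝒳) (t : L.Term 𝒳) : L.Term 𝒳 := t.relabel (Equiv.swap x y)

/-- Substitution in literals. -/
def Lit.osub (x : 𝒳) (θ : L.Term 𝒳) : Lit L 𝒳 → Lit L 𝒳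
  | .eq t₁ t₂ => .eq (tsub x θ t₁) (tsub x θ t₂)
  | .ne t₁ t₂ => .ne (tsub x θ t₁) (tsub x θ t₂)
  | .rel R ts => .rel R (fun i => tsub x θ (ts i))
  | .nrel R ts => .nrel R (fun i => tsub x θ (ts i))

/-- Swapping object variables in literals. -/
def Lit.oswap (x y : 𝒳) : Lit L 𝒳 → Lit L 𝒳
  | .eq t₁ t₂ => .eq (tswap x y t₁) (tswap x y t₂)
  | .ne t₁ t₂ => .ne (tswap x y t₁) (tswap x y t₂)
  | .rel R ts => .rel R (fun i => tswap x y (ts i))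
  | .nrel R ts => .nrel R (fun i => tswap x y (ts i))

namespace CAct

/-- Whether the transition binds (assigns) the object variable `x`. -/
def bindsB (x : 𝒳) : CAct L 𝒳 A₀ → Bool
  | .base _ => false
  | .asn y _ => decide (y = x)
  | .rand y => decide (y = x)

/-- Substitution of `θ` for `x` in a transition symbol. -/
def osub (x : 𝒳) (θ : L.Term 𝒳) : CAct L 𝒳 A₀ → CAct L 𝒳 A₀
  | .base a => .base a
  | .asn y η => .asn y (tsub x θ η)
  | .rand y => .rand y

/-- Renaming `x ↔ y` in a transition symbol, using the signature's closure `sw`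
of base transition symbols under renaming. -/
def oswap (sw : 𝒳 → 𝒳 → A₀ → A₀) (x y : 𝒳) : CAct L 𝒳 A₀ → CAct L 𝒳 A₀
  | .base a => .base (sw x y a)
  | .asn z η => .asn (Equiv.swap x y z) (tswap x y η)
  | .rand z => .rand (Equiv.swap x y z)

/-- The object variables a transition symbol may depend on, given an interface
`fvB` for base transition symbols. -/
def ovarsF (fvB : A₀ → Set 𝒳) : CAct L 𝒳 A₀ → Set 𝒳
  | .base b => fvB b
  | .asn x θ => {x} ∪ tvars θ
  | .rand x => {x}

/-- The object variables bound (assigned) by a transition symbol. -/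
def obinds : CAct L 𝒳 A₀ → Set 𝒳
  | .base _ => ∅
  | .asn x _ => {x}
  | .rand x => {x}

/-- The base transition symbols of a transition symbol. -/
def bases : CAct L 𝒳 A₀ → Set A₀
  | .base a => {a}
  | .asn _ _ => ∅
  | .rand _ => ∅

end CAct

/-- Interpretation of transition symbols in an assignment and quantifier structure:
base symbols are interpreted by `trb`, deterministic assignments update the assigned
variable to the value of the term, nondeterministic assignments update it arbitrarily. -/
def ctrans {M : Type*} [L.Structure M] (trb : A₀ → (𝒳 → M) → (𝒳 → M) → Prop) :
    CAct L 𝒳 A₀ → (𝒳 → M) → (𝒳 → M) → Prop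
  | .base b => trb b
  | .asn x θ => fun ω ν => ν = Function.update ω x (θ.realize ω)
  | .rand x => fun ω ν => ∃ e : M, ν = Function.update ω x e

end CActDefs

/-! ## Syntactic operations on μ-calculus formulas over such signatures -/

section MuCalcOps

variable {L : Language} {𝒳 V A₀ : Type*} [DecidableEq 𝒳] [DecidableEq V]

namespace MuF

/-- Substitution `φ[θ/x]` of a term for an object variable. Base transition symbols
are unaffected; substitution stops under transitions binding `x`. -/
def osub (x : 𝒳) (θ : L.Term 𝒳) :
    MuF L 𝒳 (CAct L 𝒳 A₀) V → MuF L 𝒳 (CAct L 𝒳 A₀) V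
  | .lit p => .lit (p.osub x θ)
  | .var X => .var X
  | .or φ ψ => .or (osub x θ φ) (osub x θ ψ)
  | .and φ ψ => .and (osub x θ φ) (osub x θ ψ)
  | .dia a φ => .dia (a.osub x θ) (if a.bindsB x then φ else osub x θ φ)
  | .box a φ => .box (a.osub x θ) (if a.bindsB x then φ else osub x θ φ)
  | .mu X φ => .mu X (osub x θ φ)
  | .nu X φ => .nu X (osub x θ φ)

/-- Renaming `φₓʸ`, swapping the object variables `x` and `y` throughout. -/
def oswap (sw : 𝒳 → 𝒳 → A₀ → A₀) (x y : 𝒳) :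
    MuF L 𝒳 (CAct L 𝒳 A₀) V → MuF L 𝒳 (CAct L 𝒳 A₀) V
  | .lit p => .lit (p.oswap x y)
  | .var X => .var X
  | .or φ ψ => .or (oswap sw x y φ) (oswap sw x y ψ)
  | .and φ ψ => .and (oswap sw x y φ) (oswap sw x y ψ)
  | .dia a φ => .dia (a.oswap sw x y) (oswap sw x y φ)
  | .box a φ => .box (a.oswap sw x y) (oswap sw x y φ)
  | .mu X φ => .mu X (oswap sw x y φ)
  | .nu X φ => .nu X (oswap sw x y φ)

/-- The object variables a formula may depend on. -/
def ovarsF (fvB : A₀ → Set 𝒳) : MuF L 𝒳 (CAct L 𝒳 A₀) V → Set 𝒳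
  | .lit p => p.ovars
  | .var _ => ∅
  | .or φ ψ => ovarsF fvB φ ∪ ovarsF fvB ψ
  | .and φ ψ => ovarsF fvB φ ∪ ovarsF fvB ψ
  | .dia a φ => a.ovarsF fvB ∪ ovarsF fvB φ
  | .box a φ => a.ovarsF fvB ∪ ovarsF fvB φ
  | .mu _ φ => ovarsF fvB φ
  | .nu _ φ => ovarsF fvB φ

/-- The object variables bound by some transition occurring in the formula. -/
def obindsC : MuF L 𝒳 (CAct L 𝒳 A₀) V → Set 𝒳
  | .lit _ => ∅
  | .var _ => ∅
  | .or φ ψ => obindsC φ ∪ obindsC ψ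
  | .and φ ψ => obindsC φ ∪ obindsC ψ
  | .dia a φ => a.obinds ∪ obindsC φ
  | .box a φ => a.obinds ∪ obindsC φ
  | .mu _ φ => obindsC φ
  | .nu _ φ => obindsC φ

/-- The base transition symbols occurring in a formula. -/
def baseActs : MuF L 𝒳 (CAct L 𝒳 A₀) V → Set A₀
  | .lit _ => ∅
  | .var _ => ∅
  | .or φ ψ => baseActs φ ∪ baseActs ψ
  | .and φ ψ => baseActs φ ∪ baseActs ψ
  | .dia a φ => a.bases ∪ baseActs φ
  | .box a φ => a.bases ∪ baseActs φ
  | .mu _ φ => baseActs φ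
  | .nu _ φ => baseActs φ

end MuF

/-- Admissibility of the substitution `φ[θ/x]` for the axiom `∃I`. -/
def OAdm (fvB : A₀ → Set 𝒳) (x : 𝒳) (θ : L.Term 𝒳)
    (φ : MuF L 𝒳 (CAct L 𝒳 A₀) V) : Prop :=
  x ∉ φ.ovarsF fvB ∨
    (φ.baseActs = ∅ ∧ (∀ y ∈ tvars θ, y ∉ φ.obindsC) ∧ φ.freeVars = ∅)

end MuCalcOps

/-! ## Propositional tautologies and equality axioms for the μ-calculus -/

section MuAx

variable {L : Language} {𝒳 Act V : Type*} [DecidableEq V]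

namespace MuF

/-- Purely propositional formulas: built from propositional variables by `∨` and `∧`. -/
def PureProp : MuF L 𝒳 Act V → Prop
  | .var _ => True
  | .or φ ψ => PureProp φ ∧ PureProp ψ
  | .and φ ψ => PureProp φ ∧ PureProp ψ
  | _ => False

/-- Evaluation of a purely propositional formula under a Boolean assignment,
interpreting bars as negation. -/
def propEval (v : V → Prop) : MuF L 𝒳 Act V → Prop
  | .var (.inl X) => v X
  | .var (.inr X) => ¬ v X
  | .or φ ψ => propEval v φ ∨ propEval v ψ
  | .and φ ψ => propEval v φ ∧ propEval v ψ
  | _ => False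

end MuF

/-- Propositional tautologies: the smallest set of formulas closed under substitution
of propositional variables that contains all valid purely propositional formulas. -/
inductive MuTaut : MuF L 𝒳 Act V → Prop
  | base {φ : MuF L 𝒳 Act V} : φ.PureProp → (∀ v : V → Prop, φ.propEval v) → MuTaut φ
  | subst {φ : MuF L 𝒳 Act V} (X : V ⊕ V) (ψ : MuF L 𝒳 Act V) :
      MuTaut φ → MuTaut (MuF.subst X ψ φ)

/-- Iterated implication `φ₁ → (φ₂ → ⋯ → χ)`. -/
def impChain : List (MuF L 𝒳 Act V) → MuF L 𝒳 Act V → MuF L 𝒳 Act V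
  | [], χ => χ
  | φ :: t, χ => φ.imp (impChain t χ)

/-- The first-order equality axioms: equality is a congruence with respect to the
function and predicate symbols of the first-order signature. -/
inductive MuEqAx : MuF L 𝒳 Act V → Prop
  | refl (t : L.Term 𝒳) : MuEqAx (.lit (.eq t t))
  | symm (t₁ t₂ : L.Term 𝒳) : MuEqAx ((MuF.lit (.eq t₁ t₂)).imp (.lit (.eq t₂ t₁)))
  | trans (t₁ t₂ t₃ : L.Term 𝒳) :
      MuEqAx ((MuF.lit (.eq t₁ t₂)).imp ((MuF.lit (.eq t₂ t₃)).imp (.lit (.eq t₁ t₃))))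
  | congFun {n : ℕ} (f : L.Functions n) (ts ts' : Fin n → L.Term 𝒳) :
      MuEqAx (impChain ((List.finRange n).map fun i => MuF.lit (.eq (ts i) (ts' i)))
        (.lit (.eq (Language.Term.func f ts) (Language.Term.func f ts'))))
  | congRel {n : ℕ} (R : L.Relations n) (ts ts' : Fin n → L.Term 𝒳) :
      MuEqAx (impChain ((List.finRange n).map fun i => MuF.lit (.eq (ts i) (ts' i)))
        ((MuF.lit (.rel R ts)).imp (.lit (.rel R ts'))))

/-- Renaming of bound propositional variables (α-equivalence). -/
inductive AEq : MuF L 𝒳 Act V → MuF L 𝒳 Act V → Prop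
  | refl (φ) : AEq φ φ
  | symm {φ ψ} : AEq φ ψ → AEq ψ φ
  | trans {φ ψ χ} : AEq φ ψ → AEq ψ χ → AEq φ χ
  | or {φ₁ φ₂ ψ₁ ψ₂} : AEq φ₁ ψ₁ → AEq φ₂ ψ₂ → AEq (.or φ₁ φ₂) (.or ψ₁ ψ₂)
  | and {φ₁ φ₂ ψ₁ ψ₂} : AEq φ₁ ψ₁ → AEq φ₂ ψ₂ → AEq (.and φ₁ φ₂) (.and ψ₁ ψ₂)
  | dia (a) {φ ψ} : AEq φ ψ → AEq (.dia a φ) (.dia a ψ)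
  | box (a) {φ ψ} : AEq φ ψ → AEq (.box a φ) (.box a ψ)
  | mu (X) {φ ψ} : AEq φ ψ → AEq (.mu X φ) (.mu X ψ)
  | nu (X) {φ ψ} : AEq φ ψ → AEq (.nu X φ) (.nu X ψ)
  | muRename {X Y : V ⊕ V} {φ : MuF L 𝒳 Act V} : Y ∉ φ.mentions → bar Y ∉ φ.mentions →
      AEq (.mu X φ) (.mu Y (MuF.subst X (.var Y) φ))
  | nuRename {X Y : V ⊕ V} {φ : MuF L 𝒳 Act V} : Y ∉ φ.mentions → bar Y ∉ φ.mentions →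
      AEq (.nu X φ) (.nu Y (MuF.subst X (.var Y) φ))

end MuAx

/-! ## The Hilbert-style proof calculus for the first-order modal μ-calculus -/

section MuCalc

variable {L : Language} {𝒳 V A₀ : Type*} [DecidableEq 𝒳] [DecidableEq V]

/-- Provability in the `Lμ`-calculus from the theory `T`, by a derivation all of whose
formulas belong to `S`. The calculus has rules `MP`, `Mₐ` and `FPμ`, the axioms
`μ` (unfolding), `∃I`, `V`, `⟨:=⟩`, all propositional tautologies and equality axioms,
and permits renaming of bound propositional variables. -/
inductive MuPrvIn (sw : 𝒳 → 𝒳 → A₀ → A₀) (fvB : A₀ → Set 𝒳)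
    (S : Set (MuF L 𝒳 (CAct L 𝒳 A₀) V)) (T : Set (MuF L 𝒳 (CAct L 𝒳 A₀) V)) :
    MuF L 𝒳 (CAct L 𝒳 A₀) V → Prop
  | hyp {φ} : φ ∈ T → φ ∈ S → MuPrvIn sw fvB S T φ
  | taut {φ} : MuTaut φ → φ.WF → φ ∈ S → MuPrvIn sw fvB S T φ
  | eqax {φ} : MuEqAx φ → φ ∈ S → MuPrvIn sw fvB S T φ
  | mufix {X φ} : (MuF.mu X φ).WF → MuF.FreeFor X (.mu X φ) φ →
      (MuF.subst X (.mu X φ) φ).iff (.mu X φ) ∈ S →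
      MuPrvIn sw fvB S T ((MuF.subst X (.mu X φ) φ).iff (.mu X φ))
  | existsI {x θ φ} : φ.WF → OAdm fvB x θ φ →
      (φ.osub x θ).imp (.dia (.rand x) φ) ∈ S →
      MuPrvIn sw fvB S T ((φ.osub x θ).imp (.dia (.rand x) φ))
  | vac {x ψ} : ψ.WF → x ∉ ψ.ovarsF fvB → ψ.freeVars = ∅ →
      (MuF.dia (.rand x) ψ).imp ψ ∈ S →
      MuPrvIn sw fvB S T ((MuF.dia (.rand x) ψ).imp ψ)
  | asgn {x y : 𝒳} {θ : L.Term 𝒳} {φ} : φ.WF → y ≠ x → y ∉ tvars θ →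
      y ∉ φ.ovarsF fvB → φ.freeVars = ∅ →
      (MuF.dia (.asn x θ) φ).iff
        (.dia (.rand y) (.and (.lit (.eq (.var y) θ)) (φ.oswap sw x y))) ∈ S →
      MuPrvIn sw fvB S T ((MuF.dia (.asn x θ) φ).iff
        (.dia (.rand y) (.and (.lit (.eq (.var y) θ)) (φ.oswap sw x y))))
  | mp {φ ψ} : MuPrvIn sw fvB S T (ψ.imp φ) → MuPrvIn sw fvB S T ψ → φ ∈ S →
      MuPrvIn sw fvB S T φ
  | mono (a : CAct L 𝒳 A₀) {ψ φ} : MuPrvIn sw fvB S T (ψ.imp φ) →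
      (MuF.dia a ψ).imp (.dia a φ) ∈ S →
      MuPrvIn sw fvB S T ((MuF.dia a ψ).imp (.dia a φ))
  | fpmu {X ψ φ} : MuF.FreeFor X φ ψ → (MuF.mu X ψ).WF →
      MuPrvIn sw fvB S T ((MuF.subst X φ ψ).imp φ) → (MuF.mu X ψ).imp φ ∈ S →
      MuPrvIn sw fvB S T ((MuF.mu X ψ).imp φ)
  | alpha {φ ψ} : AEq φ ψ → MuPrvIn sw fvB S T φ → ψ ∈ S → MuPrvIn sw fvB S T ψ

/-- Provability `T ⊢_Lμ φ` in the `Lμ`-calculus. -/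
abbrev MuPrv (sw : 𝒳 → 𝒳 → A₀ → A₀) (fvB : A₀ → Set 𝒳)
    (T : Set (MuF L 𝒳 (CAct L 𝒳 A₀) V)) : MuF L 𝒳 (CAct L 𝒳 A₀) V → Prop :=
  MuPrvIn sw fvB Set.univ T

end MuCalc

/-! ## Syntactic operations on game logic formulas over assignment signatures -/

section GLCalcOps

variable {L : Language} {𝒳 V A₀ : Type*} [DecidableEq 𝒳] [DecidableEq V]

mutual
/-- Substitution `φ[θ/x]` of a term for an object variable in game logic formulas. -/
def GLF.osub (x : 𝒳) (θ : L.Term 𝒳) :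
    GLF L 𝒳 (CAct L 𝒳 A₀) V → GLF L 𝒳 (CAct L 𝒳 A₀) V
  | .lit p => .lit (p.osub x θ)
  | .var X => .var X
  | .not φ => .not (GLF.osub x θ φ)
  | .or φ ψ => .or (GLF.osub x θ φ) (GLF.osub x θ ψ)
  | .dia γ φ => .dia (GLG.osub x θ γ) (GLF.osub x θ φ)

/-- Substitution of a term for an object variable in games. -/
def GLG.osub (x : 𝒳) (θ : L.Term 𝒳) :
    GLG L 𝒳 (CAct L 𝒳 A₀) V → GLG L 𝒳 (CAct L 𝒳 A₀) V
  | .act a => .act (a.osub x θ)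
  | .test φ => .test (GLF.osub x θ φ)
  | .choice γ₁ γ₂ => .choice (GLG.osub x θ γ₁) (GLG.osub x θ γ₂)
  | .seq γ₁ γ₂ => .seq (GLG.osub x θ γ₁) (GLG.osub x θ γ₂)
  | .star γ => .star (GLG.osub x θ γ)
  | .dual γ => .dual (GLG.osub x θ γ)
end

mutual
/-- Renaming `φₓʸ`, swapping the object variables `x` and `y` throughout. -/
def GLF.oswap (sw : 𝒳 → 𝒳 → A₀ → A₀) (x y : 𝒳) :
    GLF L 𝒳 (CAct L 𝒳 A₀) V → GLF L 𝒳 (CAct L 𝒳 A₀) V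
  | .lit p => .lit (p.oswap x y)
  | .var X => .var X
  | .not φ => .not (GLF.oswap sw x y φ)
  | .or φ ψ => .or (GLF.oswap sw x y φ) (GLF.oswap sw x y ψ)
  | .dia γ φ => .dia (GLG.oswap sw x y γ) (GLF.oswap sw x y φ)

def GLG.oswap (sw : 𝒳 → 𝒳 → A₀ → A₀) (x y : 𝒳) :
    GLG L 𝒳 (CAct L 𝒳 A₀) V → GLG L 𝒳 (CAct L 𝒳 A₀) V
  | .act a => .act (a.oswap sw x y)
  | .test φ => .test (GLF.oswap sw x y φ)
  | .choice γ₁ γ₂ => .choice (GLG.oswap sw x y γ₁) (GLG.oswap sw x y γ₂)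
  | .seq γ₁ γ₂ => .seq (GLG.oswap sw x y γ₁) (GLG.oswap sw x y γ₂)
  | .star γ => .star (GLG.oswap sw x y γ)
  | .dual γ => .dual (GLG.oswap sw x y γ)
end

mutual
/-- Object variables a game logic formula may depend on. -/
def GLF.ovarsF (fvB : A₀ → Set 𝒳) : GLF L 𝒳 (CAct L 𝒳 A₀) V → Set 𝒳
  | .lit p => p.ovars
  | .var _ => ∅
  | .not φ => GLF.ovarsF fvB φ
  | .or φ ψ => GLF.ovarsF fvB φ ∪ GLF.ovarsF fvB ψ
  | .dia γ φ => GLG.ovarsF fvB γ ∪ GLF.ovarsF fvB φ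

def GLG.ovarsF (fvB : A₀ → Set 𝒳) : GLG L 𝒳 (CAct L 𝒳 A₀) V → Set 𝒳
  | .act a => a.ovarsF fvB
  | .test φ => GLF.ovarsF fvB φ
  | .choice γ₁ γ₂ => GLG.ovarsF fvB γ₁ ∪ GLG.ovarsF fvB γ₂
  | .seq γ₁ γ₂ => GLG.ovarsF fvB γ₁ ∪ GLG.ovarsF fvB γ₂
  | .star γ => GLG.ovarsF fvB γ
  | .dual γ => GLG.ovarsF fvB γ
end

mutual
/-- Object variables bound by a transition occurring in a formula. -/
def GLF.obindsC : GLF L 𝒳 (CAct L 𝒳 A₀) V → Set 𝒳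
  | .lit _ => ∅
  | .var _ => ∅
  | .not φ => GLF.obindsC φ
  | .or φ ψ => GLF.obindsC φ ∪ GLF.obindsC ψ
  | .dia γ φ => GLG.obindsC γ ∪ GLF.obindsC φ

def GLG.obindsC : GLG L 𝒳 (CAct L 𝒳 A₀) V → Set 𝒳
  | .act a => a.obinds
  | .test φ => GLF.obindsC φ
  | .choice γ₁ γ₂ => GLG.obindsC γ₁ ∪ GLG.obindsC γ₂
  | .seq γ₁ γ₂ => GLG.obindsC γ₁ ∪ GLG.obindsC γ₂
  | .star γ => GLG.obindsC γ
  | .dual γ => GLG.obindsC γ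
end

mutual
/-- The base transition symbols occurring in a formula. -/
def GLF.baseActs : GLF L 𝒳 (CAct L 𝒳 A₀) V → Set A₀
  | .lit _ => ∅
  | .var _ => ∅
  | .not φ => GLF.baseActs φ
  | .or φ ψ => GLF.baseActs φ ∪ GLF.baseActs ψ
  | .dia γ φ => GLG.baseActs γ ∪ GLF.baseActs φ

def GLG.baseActs : GLG L 𝒳 (CAct L 𝒳 A₀) V → Set A₀
  | .act a => a.bases
  | .test φ => GLF.baseActs φ
  | .choice γ₁ γ₂ => GLG.baseActs γ₁ ∪ GLG.baseActs γ₂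
  | .seq γ₁ γ₂ => GLG.baseActs γ₁ ∪ GLG.baseActs γ₂
  | .star γ => GLG.baseActs γ
  | .dual γ => GLG.baseActs γ
end

/-- Admissibility of the substitution `φ[θ/x]` in game logic. -/
def GOAdm (fvB : A₀ → Set 𝒳) (x : 𝒳) (θ : L.Term 𝒳)
    (φ : GLF L 𝒳 (CAct L 𝒳 A₀) V) : Prop :=
  x ∉ φ.ovarsF fvB ∨ (φ.baseActs = ∅ ∧ ∀ y ∈ tvars θ, y ∉ φ.obindsC)

end GLCalcOps

/-! ## Propositional tautologies and equality axioms for game logic -/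

section GLAx

variable {L : Language} {𝒳 Act V : Type*} [DecidableEq V]

/-- Purely propositional game logic formulas. -/
def GLF.pPure : GLF L 𝒳 Act V → Prop
  | .var _ => True
  | .not φ => GLF.pPure φ
  | .or φ ψ => GLF.pPure φ ∧ GLF.pPure ψ
  | _ => False

/-- Evaluation of propositional game logic formulas. -/
def GLF.pEval (v : V → Prop) : GLF L 𝒳 Act V → Prop
  | .var X => v X
  | .not φ => ¬ GLF.pEval v φ
  | .or φ ψ => GLF.pEval v φ ∨ GLF.pEval v ψ
  | _ => False

/-- Propositional tautologies of game logic: closure of the valid purely propositional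
formulas under substitution of propositional variables. -/
inductive GLTaut : GLF L 𝒳 Act V → Prop
  | base {φ : GLF L 𝒳 Act V} : φ.pPure → (∀ v : V → Prop, φ.pEval v) → GLTaut φ
  | subst {φ : GLF L 𝒳 Act V} (X : V) (ψ : GLF L 𝒳 Act V) : GLTaut φ → GLTaut (GLF.psub X ψ φ)

/-- Iterated implication in game logic. -/
def gimpChain : List (GLF L 𝒳 Act V) → GLF L 𝒳 Act V → GLF L 𝒳 Act V
  | [], χ => χ
  | φ :: t, χ => φ.gimp (gimpChain t χ)

/-- The first-order equality axioms for game logic. -/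
inductive GLEqAx : GLF L 𝒳 Act V → Prop
  | refl (t : L.Term 𝒳) : GLEqAx (.lit (.eq t t))
  | symm (t₁ t₂ : L.Term 𝒳) : GLEqAx ((GLF.lit (.eq t₁ t₂)).gimp (.lit (.eq t₂ t₁)))
  | trans (t₁ t₂ t₃ : L.Term 𝒳) :
      GLEqAx ((GLF.lit (.eq t₁ t₂)).gimp ((GLF.lit (.eq t₂ t₃)).gimp (.lit (.eq t₁ t₃))))
  | congFun {n : ℕ} (f : L.Functions n) (ts ts' : Fin n → L.Term 𝒳) :
      GLEqAx (gimpChain ((List.finRange n).map fun i => GLF.lit (.eq (ts i) (ts' i)))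
        (.lit (.eq (Language.Term.func f ts) (Language.Term.func f ts'))))
  | congRel {n : ℕ} (R : L.Relations n) (ts ts' : Fin n → L.Term 𝒳) :
      GLEqAx (gimpChain ((List.finRange n).map fun i => GLF.lit (.eq (ts i) (ts' i)))
        ((GLF.lit (.rel R ts)).gimp (.lit (.rel R ts'))))

end GLAx

/-! ## The Hilbert-style proof calculus for first-order game logic -/

section GLCalc

variable {L : Language} {𝒳 V A₀ : Type*} [DecidableEq 𝒳] [DecidableEq V]

/-- Provability `T ⊢_GL φ` in the `GL`-calculus (operating on `GL`-formulas, i.e.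
formulas without propositional variables), with rules `MP`, `M`, `FP*`, the game
axioms `⟨?⟩`, `⟨∪⟩`, `⟨;⟩`, `⟨*⟩`, `⟨ᵈ⟩`, the axioms `∃I`, `V`, `⟨:=⟩`, and all
propositional tautologies and equality axioms. -/
inductive GLPrv (sw : 𝒳 → 𝒳 → A₀ → A₀) (fvB : A₀ → Set 𝒳)
    (T : Set (GLF L 𝒳 (CAct L 𝒳 A₀) V)) : GLF L 𝒳 (CAct L 𝒳 A₀) V → Prop
  | hyp {φ} : φ ∈ T → GLPrv sw fvB T φ
  | taut {φ} : GLTaut φ → φ.pvars = ∅ → GLPrv sw fvB T φ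
  | eqax {φ} : GLEqAx φ → GLPrv sw fvB T φ
  | existsI {x θ φ} : φ.pvars = ∅ → GOAdm fvB x θ φ →
      GLPrv sw fvB T ((φ.osub x θ).gimp (.dia (.act (.rand x)) φ))
  | vac {x ψ} : ψ.pvars = ∅ → x ∉ ψ.ovarsF fvB →
      GLPrv sw fvB T ((GLF.dia (.act (.rand x)) ψ).gimp ψ)
  | asgn {x y : 𝒳} {θ : L.Term 𝒳} {φ} : φ.pvars = ∅ → y ≠ x → y ∉ tvars θ →
      y ∉ φ.ovarsF fvB →
      GLPrv sw fvB T ((GLF.dia (.act (.asn x θ)) φ).giff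
        (.dia (.act (.rand y)) ((GLF.lit (.eq (.var y) θ)).gand (φ.oswap sw x y))))
  | testAx {ψ φ} : ψ.pvars = ∅ → φ.pvars = ∅ →
      GLPrv sw fvB T ((GLF.dia (.test ψ) φ).giff (ψ.gand φ))
  | choiceAx {γ₁ γ₂ φ} : γ₁.pvars = ∅ → γ₂.pvars = ∅ → φ.pvars = ∅ →
      GLPrv sw fvB T ((GLF.dia (.choice γ₁ γ₂) φ).giff (.or (.dia γ₁ φ) (.dia γ₂ φ)))
  | seqAx {γ₁ γ₂ φ} : γ₁.pvars = ∅ → γ₂.pvars = ∅ → φ.pvars = ∅ →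
      GLPrv sw fvB T ((GLF.dia (.seq γ₁ γ₂) φ).giff (.dia γ₁ (.dia γ₂ φ)))
  | starAx {γ φ} : γ.pvars = ∅ → φ.pvars = ∅ →
      GLPrv sw fvB T ((GLF.dia (.star γ) φ).giff (.or φ (.dia γ (.dia (.star γ) φ))))
  | dualAx {γ φ} : γ.pvars = ∅ → φ.pvars = ∅ →
      GLPrv sw fvB T ((GLF.dia (.dual γ) φ).giff (.not (.dia γ (.not φ))))
  | mp {φ ψ} : GLPrv sw fvB T (ψ.gimp φ) → GLPrv sw fvB T ψ → GLPrv sw fvB T φ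
  | mono (γ : GLG L 𝒳 (CAct L 𝒳 A₀) V) {ψ φ} : γ.pvars = ∅ →
      GLPrv sw fvB T (ψ.gimp φ) →
      GLPrv sw fvB T ((GLF.dia γ ψ).gimp (.dia γ φ))
  | fp {γ ψ φ} : γ.pvars = ∅ →
      GLPrv sw fvB T ((GLF.or ψ (.dia γ φ)).gimp φ) →
      GLPrv sw fvB T ((GLF.dia (.star γ) ψ).gimp φ)

end GLCalc

/-!
Induction on `φ`; only the fixpoint cases need an idea. After `ℓ := c_X`, Angel wins the loop
of `(μX.φ)^ϑ` into `D` exactly on the least fixed point of `Z ↦ {ℓ = c_X}.ite (g Z) D`, where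
`g` is the game semantics of `φ^ϑ[X]`: on the slice `ℓ = c_X` the loop goes on, off it the game
has been left towards `D`. For an `ℓ`-independent `E`, the target `{ℓ = c_X}.ite E D` satisfies
condition (∗) for the valuation `Ω[E/X]`, so the induction hypothesis gives
`⟦φ⟧(Ω[E/X]) = g ({ℓ = c_X}.ite E D)`. As `ℓ` is independent of everything in sight, the fixed
points of `E ↦ ⟦φ⟧(Ω[E/X])` are `ℓ`-independent, and restricting to the slice `ℓ = c_X` carries
the fixed points of one map to those of the other. The `ν` case is the same with greatest fixed
points, `γ^×` being the dual of `γ*`.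
-/
theorem unbar_eq_unbar_iff {V : Type*} {X Y : V ⊕ V} :
    unbar Y = unbar X ↔ Y = X ∨ Y = bar X := by
  cases X <;> cases Y <;> simp [unbar, bar]

section Valuations

variable {𝒳 V M : Type*} [DecidableEq V] {Ω : V → Set (𝒳 → M)} {X Y : V ⊕ V}
  {E F : Set (𝒳 → M)}

theorem modif_apply_of_ne {y : V} (h : unbar X ≠ y) : modif Ω X E y = Ω y := by
  cases X <;> exact Function.update_of_ne (Ne.symm h) _ _

theorem barVal_modif_self : barVal (modif Ω X E) X = E := by
  cases X <;> simp [barVal, modif]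

theorem barVal_modif_of_unbar_ne (h : unbar Y ≠ unbar X) :
    barVal (modif Ω X E) Y = barVal Ω Y := by
  cases Y with
  | inl y => exact modif_apply_of_ne (Ne.symm h)
  | inr y => exact congrArg compl (modif_apply_of_ne (Ne.symm h))

theorem modif_modif_of_unbar_eq (h : unbar X = unbar Y) :
    modif (modif Ω X E) Y F = modif Ω Y F := by
  cases X <;> cases Y <;> simp only [unbar, Sum.elim_inl, Sum.elim_inr, id_eq] at h <;>
    subst h <;> simp [modif]

theorem modif_comm (h : unbar X ≠ unbar Y) :
    modif (modif Ω X E) Y F = modif (modif Ω Y F) X E := by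
  cases X <;> cases Y <;> simp only [unbar, Sum.elim_inl, Sum.elim_inr, id_eq] at h <;>
    simp [modif, Function.update_comm h]

end Valuations

section Monotonicity

variable {L : Language} {𝒳 Act V M : Type*} [L.Structure M]
  {tr : Act → (𝒳 → M) → (𝒳 → M) → Prop}

theorem GLG.sem_mono : ∀ (γ : GLG L 𝒳 Act V) (Ω : V → Set (𝒳 → M)), Monotone (γ.sem tr Ω)
  | .act _, _, _, _, h => fun _ ⟨ν, hν, hD⟩ => ⟨ν, hν, h hD⟩
  | .test _, _, _, _, h => inter_subset_inter_right _ h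
  | .choice γ₁ γ₂, Ω, _, _, h => union_subset_union (sem_mono γ₁ Ω h) (sem_mono γ₂ Ω h)
  | .seq γ₁ γ₂, Ω, _, _, h => sem_mono γ₁ Ω (sem_mono γ₂ Ω h)
  | .star _, _, _, _, h => sInter_subset_sInter fun _ hZ => (union_subset_union_left _ h).trans hZ
  | .dual γ, Ω, _, _, h => compl_subset_compl.2 (sem_mono γ Ω (compl_subset_compl.2 h))

variable [DecidableEq V]

theorem MuF.sem_modif_mono (X : V ⊕ V) (φ : MuF L 𝒳 Act V) (hX : bar X ∉ φ.mentions)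
    (Ω : V → Set (𝒳 → M)) : Monotone fun E => φ.sem tr (modif Ω X E) := by
  induction φ generalizing Ω with
  | lit p => exact monotone_const
  | var Y =>
    intro E F h
    simp only [MuF.mentions, mem_singleton_iff] at hX
    by_cases hYX : unbar Y = unbar X
    · rcases unbar_eq_unbar_iff.1 hYX with rfl | rfl
      · simpa [MuF.sem, barVal_modif_self] using h
      · exact absurd rfl hX
    · simp [MuF.sem, barVal_modif_of_unbar_ne hYX]
  | or φ ψ ihφ ihψ =>
    simp only [MuF.mentions, mem_union, not_or] at hX
    exact fun E F h => union_subset_union (ihφ hX.1 Ω h) (ihψ hX.2 Ω h)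
  | and φ ψ ihφ ihψ =>
    simp only [MuF.mentions, mem_union, not_or] at hX
    exact fun E F h => inter_subset_inter (ihφ hX.1 Ω h) (ihψ hX.2 Ω h)
  | dia a φ ih => exact fun E F h ω ⟨ν, hν, hφ⟩ => ⟨ν, hν, ih hX Ω h hφ⟩
  | box a φ ih => exact fun E F h ω hω ν hν => ih hX Ω h (hω ν hν)
  | mu Y φ ih | nu Y φ ih =>
    simp only [MuF.mentions, mem_union, not_or] at hX
    intro E F h
    by_cases hXY : unbar X = unbar Y
    · simp only [MuF.sem, modif_modif_of_unbar_eq hXY, le_refl]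
    · simp only [MuF.sem, modif_comm hXY]
      first
      | exact sInter_subset_sInter fun Z hZ => (ih hX.2 (modif Ω Y Z) h).trans hZ
      | exact sUnion_subset_sUnion fun Z hZ => hZ.trans (ih hX.2 (modif Ω Y Z) h)

end Monotonicity

section Fixpoints

variable {α : Type*} {f : Set α → Set α}

theorem map_sInter_prefixed (hf : Monotone f) : f (⋂₀ {Z | f Z ⊆ Z}) = ⋂₀ {Z | f Z ⊆ Z} :=
  OrderHom.map_lfp ⟨f, hf⟩

theorem map_sUnion_postfixed (hf : Monotone f) : f (⋃₀ {Z | Z ⊆ f Z}) = ⋃₀ {Z | Z ⊆ f Z} :=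
  OrderHom.map_gfp ⟨f, hf⟩

theorem compl_sInter_prefixed (f : Set α → Set α) :
    (⋂₀ {Z | f Z ⊆ Z})ᶜ = ⋃₀ {Y | Y ⊆ (f Yᶜ)ᶜ} := by
  rw [compl_sInter]
  congr 1
  ext Y
  simp only [mem_image, mem_ofPred_eq]
  constructor
  · rintro ⟨Z, hZ, rfl⟩
    rwa [compl_compl, compl_subset_compl]
  · exact fun hY => ⟨Yᶜ, subset_compl_comm.1 hY, compl_compl Y⟩

end Fixpoints

section Independence

variable {𝒳 M : Type*} [DecidableEq 𝒳] {ℓ : 𝒳}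

def IndepSet (ℓ : 𝒳) (S : Set (𝒳 → M)) : Prop :=
  ∀ (b : M) (ω : 𝒳 → M), ω ∈ S ↔ Function.update ω ℓ b ∈ S

theorem IndepSet.compl {S : Set (𝒳 → M)} (h : IndepSet ℓ S) : IndepSet ℓ Sᶜ :=
  fun b ω => not_congr (h b ω)

theorem IndepSet.union {S T : Set (𝒳 → M)} (hS : IndepSet ℓ S) (hT : IndepSet ℓ T) :
    IndepSet ℓ (S ∪ T) :=
  fun b ω => or_congr (hS b ω) (hT b ω)

theorem IndepSet.inter {S T : Set (𝒳 → M)} (hS : IndepSet ℓ S) (hT : IndepSet ℓ T) :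
    IndepSet ℓ (S ∩ T) :=
  fun b ω => and_congr (hS b ω) (hT b ω)

theorem IndepSet.preimage_update {S : Set (𝒳 → M)} (h : IndepSet ℓ S) (b : M) :
    (Function.update · ℓ b) ⁻¹' S = S :=
  ext fun ω => (h b ω).symm

theorem indepSet_preimage_update (b : M) (S : Set (𝒳 → M)) :
    IndepSet ℓ ((Function.update · ℓ b) ⁻¹' S) :=
  fun b' ω => by simp

theorem indepSet_iInter_preimage_update (S : Set (𝒳 → M)) :
    IndepSet ℓ (⋂ b, (Function.update · ℓ b) ⁻¹' S) :=
  fun b' ω => by simp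

theorem indepSet_iUnion_preimage_update (S : Set (𝒳 → M)) :
    IndepSet ℓ (⋃ b, (Function.update · ℓ b) ⁻¹' S) :=
  fun b' ω => by simp

theorem iInter_preimage_update_subset (S : Set (𝒳 → M)) :
    ⋂ b, (Function.update · ℓ b) ⁻¹' S ⊆ S :=
  fun ω hω => by simpa using mem_iInter.1 hω (ω ℓ)

theorem subset_iUnion_preimage_update (S : Set (𝒳 → M)) :
    S ⊆ ⋃ b, (Function.update · ℓ b) ⁻¹' S :=
  fun ω hω => mem_iUnion.2 ⟨ω ℓ, by simpa using hω⟩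

theorem IndepSet.subset_iInter_preimage_update {S T : Set (𝒳 → M)} (hS : IndepSet ℓ S)
    (h : S ⊆ T) : S ⊆ ⋂ b, (Function.update · ℓ b) ⁻¹' T :=
  fun ω hω => mem_iInter.2 fun b => h ((hS b ω).1 hω)

theorem IndepSet.iUnion_preimage_update_subset {S T : Set (𝒳 → M)} (hT : IndepSet ℓ T)
    (h : S ⊆ T) : ⋃ b, (Function.update · ℓ b) ⁻¹' S ⊆ T :=
  iUnion_subset fun b ω hω => (hT b ω).2 (h hω)

variable {f : Set (𝒳 → M) → Set (𝒳 → M)}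

/-- The least prefixed point `μ` equals its largest `ℓ`-independent subset, because that
subset is again prefixed. -/
theorem IndepSet.sInter_prefixed (hf : Monotone f)
    (hI : ∀ E, IndepSet ℓ E → IndepSet ℓ (f E)) : IndepSet ℓ (⋂₀ {Z | f Z ⊆ Z}) := by
  set μ := ⋂₀ {Z | f Z ⊆ Z}
  set core := ⋂ b, (Function.update · ℓ b) ⁻¹' μ
  have hcore : IndepSet ℓ core := indepSet_iInter_preimage_update μ
  have hpre : f core ⊆ core :=
    (hI core hcore).subset_iInter_preimage_update
      ((hf (iInter_preimage_update_subset μ)).trans (map_sInter_prefixed hf).le)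
  have : μ = core := (sInter_subset_of_mem hpre).antisymm (iInter_preimage_update_subset μ)
  rwa [this]

theorem IndepSet.sUnion_postfixed (hf : Monotone f)
    (hI : ∀ E, IndepSet ℓ E → IndepSet ℓ (f E)) : IndepSet ℓ (⋃₀ {Z | Z ⊆ f Z}) := by
  set ν := ⋃₀ {Z | Z ⊆ f Z}
  set hull := ⋃ b, (Function.update · ℓ b) ⁻¹' ν
  have hhull : IndepSet ℓ hull := indepSet_iUnion_preimage_update ν
  have hpost : hull ⊆ f hull :=
    (hI hull hhull).iUnion_preimage_update_subset
      ((map_sUnion_postfixed hf).ge.trans (hf (subset_iUnion_preimage_update ν)))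
  have : ν = hull := (subset_iUnion_preimage_update ν).antisymm (subset_sUnion_of_mem hpost)
  rwa [this]

end Independence

section SemanticsIndependence

variable {L : Language} {𝒳 Act V M : Type*} [DecidableEq 𝒳] [L.Structure M] {ℓ : 𝒳}
  {tr : Act → (𝒳 → M) → (𝒳 → M) → Prop}

theorem realize_update_of_notMem_tvars {t : L.Term 𝒳} (h : ℓ ∉ tvars t) (ω : 𝒳 → M) (b : M) :
    t.realize (Function.update ω ℓ b) = t.realize ω := by
  induction t with
  | var x => exact Function.update_of_ne (by simpa [tvars, eq_comm] using h) _ _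
  | func f ts ih =>
    simp only [tvars, mem_iUnion, not_exists] at h
    simp only [Language.Term.realize, ih _ (h _)]

theorem indepSet_lit_sem {p : Lit L 𝒳} (h : ℓ ∉ p.ovars) : IndepSet ℓ (p.sem (M := M)) := by
  intro b ω
  cases p <;> simp only [Lit.ovars, mem_union, mem_iUnion, not_or, not_exists] at h <;>
    simp [Lit.sem, realize_update_of_notMem_tvars, h]

theorem IndepAct.of_update {a : Act} (ha : IndepAct tr ℓ a) {ω ν : 𝒳 → M} {b : M}
    (h : tr a (Function.update ω ℓ b) ν) : tr a ω (Function.update ν ℓ (ω ℓ)) := by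
  simpa using ha (ω ℓ) _ _ h

theorem IndepAct.dia {a : Act} (ha : IndepAct tr ℓ a) {S : Set (𝒳 → M)} (hS : IndepSet ℓ S) :
    IndepSet ℓ {ω | ∃ ν, tr a ω ν ∧ ν ∈ S} := fun b ω =>
  ⟨fun ⟨ν, h, hν⟩ => ⟨_, ha b ω ν h, (hS b ν).1 hν⟩,
   fun ⟨ν, h, hν⟩ => ⟨_, ha.of_update h, (hS _ ν).1 hν⟩⟩

theorem IndepAct.box {a : Act} (ha : IndepAct tr ℓ a) {S : Set (𝒳 → M)} (hS : IndepSet ℓ S) :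
    IndepSet ℓ {ω | ∀ ν, tr a ω ν → ν ∈ S} := fun b ω =>
  ⟨fun h ν hν => (hS _ ν).2 (h _ (ha.of_update hν)),
   fun h ν hν => (hS b ν).2 (h _ (ha b ω ν hν))⟩

variable {Ω : V → Set (𝒳 → M)}

theorem IndepVal.barVal (hΩ : IndepVal ℓ Ω) (X : V ⊕ V) : IndepSet ℓ (barVal Ω X) := by
  cases X with
  | inl x => exact hΩ x
  | inr x => exact IndepSet.compl (hΩ x)

variable [DecidableEq V]

theorem IndepVal.modif (hΩ : IndepVal ℓ Ω) (X : V ⊕ V) {E : Set (𝒳 → M)}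
    (hE : IndepSet ℓ E) : IndepVal ℓ (modif Ω X E) := by
  intro y
  by_cases hy : unbar X = y
  · subst hy
    cases X <;> simp only [GLMu.modif, unbar, Sum.elim_inl, Sum.elim_inr, id, Function.update_self]
    exacts [hE, hE.compl]
  · rw [modif_apply_of_ne hy]
    exact hΩ y

theorem MuF.sem_indep (φ : MuF L 𝒳 Act V) (hWF : φ.WF) (hℓ : ℓ ∉ φ.ovars)
    (hind : ∀ a ∈ φ.acts, IndepAct tr ℓ a) (hΩ : IndepVal ℓ Ω) : IndepSet ℓ (φ.sem tr Ω) := by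
  induction φ generalizing Ω with
  | lit p => exact indepSet_lit_sem hℓ
  | var X => exact hΩ.barVal X
  | or φ ψ ihφ ihψ | and φ ψ ihφ ihψ =>
    simp only [MuF.ovars, mem_union, not_or] at hℓ
    have hφ := ihφ hWF.1 hℓ.1 (fun a ha => hind a (Or.inl ha)) hΩ
    have hψ := ihψ hWF.2 hℓ.2 (fun a ha => hind a (Or.inr ha)) hΩ
    first | exact hφ.union hψ | exact hφ.inter hψ
  | dia a φ ih =>
    exact (hind a (Or.inl rfl)).dia (ih hWF hℓ (fun a ha => hind a (Or.inr ha)) hΩ)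
  | box a φ ih =>
    exact (hind a (Or.inl rfl)).box (ih hWF hℓ (fun a ha => hind a (Or.inr ha)) hΩ)
  | mu X φ ih =>
    exact IndepSet.sInter_prefixed (MuF.sem_modif_mono X φ hWF.1 Ω)
      fun E hE => ih hWF.2 hℓ hind (hΩ.modif X hE)
  | nu X φ ih =>
    exact IndepSet.sUnion_postfixed (MuF.sem_modif_mono X φ hWF.1 Ω)
      fun E hE => ih hWF.2 hℓ hind (hΩ.modif X hE)

end SemanticsIndependence

theorem Set.ite_ite_same_left {α : Type*} (t s s' s'' : Set α) :
    t.ite (t.ite s s') s'' = t.ite s s'' := by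
  ext x
  by_cases hx : x ∈ t <;> simp [Set.ite, hx]

section ControlSlices

variable {𝒳 M : Type*} [DecidableEq 𝒳] {ℓ : 𝒳}

theorem preimage_update_ite (κ : M) (A D : Set (𝒳 → M)) :
    (Function.update · ℓ κ) ⁻¹' {ω | ω ℓ = κ}.ite A D = (Function.update · ℓ κ) ⁻¹' A := by
  have : (Function.update · ℓ κ) ⁻¹' {ω : 𝒳 → M | ω ℓ = κ} = univ := by ext; simp
  rw [preimage_ite, this, ite_univ]

theorem preimage_update_ite_of_ne {κ κ' : M} (h : κ' ≠ κ) (A D : Set (𝒳 → M)) :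
    (Function.update · ℓ κ') ⁻¹' {ω | ω ℓ = κ}.ite A D = (Function.update · ℓ κ') ⁻¹' D := by
  have : (Function.update · ℓ κ') ⁻¹' {ω : 𝒳 → M | ω ℓ = κ} = ∅ := by ext; simp [h]
  rw [preimage_ite, this, ite_empty]

theorem ite_preimage_update (κ : M) (A D : Set (𝒳 → M)) :
    {ω | ω ℓ = κ}.ite ((Function.update · ℓ κ) ⁻¹' A) D = {ω | ω ℓ = κ}.ite A D := by
  ext ω
  by_cases hω : ω ℓ = κ
  · subst hω
    simp [Set.ite]
  · simp [Set.ite, hω]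

variable {κ : M} {D : Set (𝒳 → M)} {T g : Set (𝒳 → M) → Set (𝒳 → M)}

theorem map_preimage_update_of_ite_eq (hTI : ∀ E, IndepSet ℓ E → IndepSet ℓ (T E))
    (hTg : ∀ E, IndepSet ℓ E → T E = g ({ω | ω ℓ = κ}.ite E D)) {Z : Set (𝒳 → M)}
    (hZ : {ω | ω ℓ = κ}.ite (g Z) D = Z) :
    T ((Function.update · ℓ κ) ⁻¹' Z) = (Function.update · ℓ κ) ⁻¹' Z := by
  have hZind := indepSet_preimage_update (ℓ := ℓ) κ Z
  have hTZ : T ((Function.update · ℓ κ) ⁻¹' Z) = g Z := by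
    rw [hTg _ hZind, ite_preimage_update]
    conv_lhs => rw [← hZ, Set.ite_ite_same_left, hZ]
  calc T ((Function.update · ℓ κ) ⁻¹' Z)
      = (Function.update · ℓ κ) ⁻¹' T ((Function.update · ℓ κ) ⁻¹' Z) :=
        ((hTI _ hZind).preimage_update κ).symm
    _ = (Function.update · ℓ κ) ⁻¹' {ω | ω ℓ = κ}.ite (g Z) D := by
        rw [hTZ, preimage_update_ite]
    _ = (Function.update · ℓ κ) ⁻¹' Z := by rw [hZ]

theorem preimage_update_sInter_prefixed_ite (hT : Monotone T) (hg : Monotone g)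
    (hTI : ∀ E, IndepSet ℓ E → IndepSet ℓ (T E))
    (hTg : ∀ E, IndepSet ℓ E → T E = g ({ω | ω ℓ = κ}.ite E D)) :
    (Function.update · ℓ κ) ⁻¹' ⋂₀ {Z | {ω | ω ℓ = κ}.ite (g Z) D ⊆ Z}
      = ⋂₀ {E | T E ⊆ E} := by
  have hG : Monotone fun Z => {ω | ω ℓ = κ}.ite (g Z) D := fun _ _ h => ite_mono _ (hg h) le_rfl
  have hE := IndepSet.sInter_prefixed hT hTI
  refine subset_antisymm ?_ (sInter_subset_of_mem
    (map_preimage_update_of_ite_eq hTI hTg (map_sInter_prefixed hG)).le)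
  calc (Function.update · ℓ κ) ⁻¹' ⋂₀ {Z | {ω | ω ℓ = κ}.ite (g Z) D ⊆ Z}
      ⊆ (Function.update · ℓ κ) ⁻¹' {ω | ω ℓ = κ}.ite (⋂₀ {E | T E ⊆ E}) D := by
        refine preimage_mono (sInter_subset_of_mem ?_)
        rw [mem_ofPred_eq, ← hTg _ hE, map_sInter_prefixed hT]
    _ = ⋂₀ {E | T E ⊆ E} := by rw [preimage_update_ite, hE.preimage_update]

theorem preimage_update_sUnion_postfixed_ite (hT : Monotone T) (hg : Monotone g)
    (hTI : ∀ E, IndepSet ℓ E → IndepSet ℓ (T E))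
    (hTg : ∀ E, IndepSet ℓ E → T E = g ({ω | ω ℓ = κ}.ite E D)) :
    (Function.update · ℓ κ) ⁻¹' ⋃₀ {Z | Z ⊆ {ω | ω ℓ = κ}.ite (g Z) D}
      = ⋃₀ {E | E ⊆ T E} := by
  have hG : Monotone fun Z => {ω | ω ℓ = κ}.ite (g Z) D := fun _ _ h => ite_mono _ (hg h) le_rfl
  have hE := IndepSet.sUnion_postfixed hT hTI
  refine subset_antisymm (subset_sUnion_of_mem
    (map_preimage_update_of_ite_eq hTI hTg (map_sUnion_postfixed hG)).ge) ?_
  calc ⋃₀ {E | E ⊆ T E}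
      = (Function.update · ℓ κ) ⁻¹' {ω | ω ℓ = κ}.ite (⋃₀ {E | E ⊆ T E}) D := by
        rw [preimage_update_ite, hE.preimage_update]
    _ ⊆ (Function.update · ℓ κ) ⁻¹' ⋃₀ {Z | Z ⊆ {ω | ω ℓ = κ}.ite (g Z) D} := by
        refine preimage_mono (subset_sUnion_of_mem ?_)
        rw [mem_ofPred_eq, ← hTg _ hE, map_sUnion_postfixed hT]

end ControlSlices

section Games

variable {L : Language} {𝒳 Act V M : Type*} [L.Structure M]
  {tr : Act → (𝒳 → M) → (𝒳 → M) → Prop} {asn : 𝒳 → L.Term 𝒳 → Act}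

theorem GLG.sem_test_seq_dual_test_glFalse (ℓ : 𝒳) (φ : GLF L 𝒳 Act V)
    (Ω : V → Set (𝒳 → M)) (D : Set (𝒳 → M)) :
    (GLG.seq (.test φ) (.dual (.test (glFalse ℓ)))).sem tr Ω D = φ.sem tr Ω := by
  simp [GLG.sem, GLF.sem, glFalse, Lit.sem]

theorem GLG.sem_act_asn [DecidableEq 𝒳]
    (hasn : ∀ (x : 𝒳) (θ : L.Term 𝒳) (ω ν : 𝒳 → M),
      tr (asn x θ) ω ν ↔ ν = Function.update ω x (θ.realize ω))
    (x : 𝒳) (θ : L.Term 𝒳) (Ω : V → Set (𝒳 → M)) (D : Set (𝒳 → M)) :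
    (GLG.act (asn x θ) : GLG L 𝒳 Act V).sem tr Ω D
      = (fun ω => Function.update ω x (θ.realize ω)) ⁻¹' D := by
  ext ω
  simp [GLG.sem, hasn]

variable [DecidableEq V] {ℓ : 𝒳} {c : V ⊕ V → L.Constants}

theorem dictUp_apply_of_eq_true {ϑ : V → Bool} {y : V} (h : ϑ y = true) (X : V ⊕ V) :
    dictUp ϑ X y = true := by
  by_cases hy : y = unbar X
  · simp [dictUp, hy]
  · rwa [dictUp, Function.update_of_ne hy]

/-- `ϑ` turns `X` and `X̄` into assignments `ℓ := c_X`, so `φ^ϑ` never reads `Ω (unbar X)`. -/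
theorem trGame_sem_modif (φ : MuF L 𝒳 Act V) {ϑ : V → Bool} {X : V ⊕ V}
    (hX : ϑ (unbar X) = true) (Ω : V → Set (𝒳 → M)) (E : Set (𝒳 → M)) :
    (trGame ℓ c asn φ ϑ).sem tr (modif Ω X E) = (trGame ℓ c asn φ ϑ).sem tr Ω := by
  induction φ generalizing ϑ with
  | lit p => rfl
  | var Y =>
    by_cases hY : ϑ (unbar Y) = true
    · simp only [trGame, hY, if_true]
      rfl
    · have hXY : unbar X ≠ unbar Y := fun h => hY (h ▸ hX)
      cases Y <;> simp only [unbar, Sum.elim_inl, Sum.elim_inr, id] at hXY <;>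
        simp [trGame, hY, GLG.sem, GLF.sem, gvar, glFalse, modif_apply_of_ne hXY]
  | or φ ψ ihφ ihψ | and φ ψ ihφ ihψ =>
    simp only [trGame, GLG.dchoice, GLG.sem, ihφ hX, ihψ hX]
  | dia a φ ih | box a φ ih => simp only [trGame, GLG.sem, ih hX]
  | mu Y φ ih | nu Y φ ih =>
    simp only [trGame, GLG.cross, GLG.sem, GLF.sem, ih (dictUp_apply_of_eq_true hX Y)]

variable [DecidableEq 𝒳] {X : V ⊕ V} {φ : MuF L 𝒳 Act V} {ϑ : V → Bool} {Ω : V → Set (𝒳 → M)} {D : Set (𝒳 → M)}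

theorem trGame_sem_mu
    (hasn : ∀ (x : 𝒳) (θ : L.Term 𝒳) (ω ν : 𝒳 → M),
      tr (asn x θ) ω ν ↔ ν = Function.update ω x (θ.realize ω)) :
    (trGame ℓ c asn (.mu X φ) ϑ).sem tr Ω D = (Function.update · ℓ (c X : M)) ⁻¹'
      ⋂₀ {Z | {ω | ω ℓ = (c X : M)}.ite ((trGame ℓ c asn φ (dictUp ϑ X)).sem tr Ω Z) D ⊆ Z} := by
  have hite (Z : Set (𝒳 → M)) : {ω | ω ℓ ≠ (c X : M)} ∩ D ∪ {ω | ω ℓ = (c X : M)} ∩ Z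
      = {ω | ω ℓ = (c X : M)}.ite Z D := by
    ext ω
    by_cases hω : ω ℓ = c X <;> simp [Set.ite, hω]
  rw [trGame, GLG.sem, GLG.sem_act_asn hasn]
  simp [GLG.sem, GLF.sem, Lit.sem, hite]

theorem trGame_sem_nu
    (hasn : ∀ (x : 𝒳) (θ : L.Term 𝒳) (ω ν : 𝒳 → M),
      tr (asn x θ) ω ν ↔ ν = Function.update ω x (θ.realize ω)) :
    (trGame ℓ c asn (.nu X φ) ϑ).sem tr Ω D = (Function.update · ℓ (c X : M)) ⁻¹'
      ⋃₀ {Z | Z ⊆ {ω | ω ℓ = (c X : M)}.ite ((trGame ℓ c asn φ (dictUp ϑ X)).sem tr Ω Z) D} := by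
  have hite (Z : Set (𝒳 → M)) : ({ω | ω ℓ ≠ (c X : M)} ∩ Dᶜ ∪ {ω | ω ℓ = (c X : M)} ∩ Zᶜ)ᶜ
      = {ω | ω ℓ = (c X : M)}.ite Z D := by
    ext ω
    by_cases hω : ω ℓ = c X <;> simp [Set.ite, hω]
  rw [trGame, GLG.sem, GLG.sem_act_asn hasn]
  simp only [GLG.cross, GLG.sem]
  rw [compl_sInter_prefixed]
  simp [GLF.sem, Lit.sem, hite]

end Games

section Counterembedding

variable {L : Language} {𝒳 Act V M : Type*} [DecidableEq 𝒳] [L.Structure M]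
  {tr : Act → (𝒳 → M) → (𝒳 → M) → Prop} {asn : 𝒳 → L.Term 𝒳 → Act} {ℓ : 𝒳}
  {c : V ⊕ V → L.Constants}

/-- Condition (∗) for the variables in `S`, with `Ω⟦ℓ:=c_X⟧(D)` unfolded to a preimage. -/
def StarCond (ℓ : 𝒳) (c : V ⊕ V → L.Constants) (Ω : V → Set (𝒳 → M)) (ϑ : V → Bool)
    (D : Set (𝒳 → M)) (S : Set (V ⊕ V)) : Prop :=
  ∀ X ∈ S, ϑ (unbar X) = true → (Function.update · ℓ (c X : M)) ⁻¹' D = barVal Ω X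

theorem StarCond.mono {Ω : V → Set (𝒳 → M)} {ϑ : V → Bool} {D : Set (𝒳 → M)}
    {S S' : Set (V ⊕ V)} (h : StarCond ℓ c Ω ϑ D S) (hS : S' ⊆ S) : StarCond ℓ c Ω ϑ D S' :=
  fun X hX => h X (hS hX)

variable [DecidableEq V] {Ω : V → Set (𝒳 → M)} {ϑ : V → Bool} {D : Set (𝒳 → M)}
  {S : Set (V ⊕ V)}

theorem StarCond.modif_ite (h : StarCond ℓ c Ω ϑ D S) (hc : Function.Injective fun X => (c X : M))
    {X : V ⊕ V} (hX : bar X ∉ S) {E : Set (𝒳 → M)} (hE : IndepSet ℓ E) :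
    StarCond ℓ c (modif Ω X E) (dictUp ϑ X) ({ω | ω ℓ = (c X : M)}.ite E D) S := by
  intro Y hY hYt
  by_cases hYX : unbar Y = unbar X
  · rcases unbar_eq_unbar_iff.1 hYX with rfl | rfl
    · rw [preimage_update_ite, hE.preimage_update, barVal_modif_self]
    · exact absurd hY hX
  · have hne : (c Y : M) ≠ c X := hc.ne fun h => hYX (congrArg unbar h)
    rw [preimage_update_ite_of_ne hne, barVal_modif_of_unbar_ne hYX]
    exact h Y hY (by rwa [dictUp, Function.update_of_ne hYX] at hYt)

theorem MuF.sem_eq_trGame_sem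
    (hasn : ∀ (x : 𝒳) (θ : L.Term 𝒳) (ω ν : 𝒳 → M),
      tr (asn x θ) ω ν ↔ ν = Function.update ω x (θ.realize ω))
    (hc : Function.Injective fun X => (c X : M)) (φ : MuF L 𝒳 Act V) (hWF : φ.WF)
    (hℓ : ℓ ∉ φ.ovars) (hind : ∀ a ∈ φ.acts, IndepAct tr ℓ a) (hΩ : IndepVal ℓ Ω)
    (hD : StarCond ℓ c Ω ϑ D φ.mentions) :
    φ.sem tr Ω = (trGame ℓ c asn φ ϑ).sem tr Ω D := by
  induction φ generalizing Ω ϑ D with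
  | lit p => exact (GLG.sem_test_seq_dual_test_glFalse ℓ (.lit p) Ω D).symm
  | var Y =>
    by_cases hY : ϑ (unbar Y) = true
    · simpa [MuF.sem, trGame, hY, GLG.sem_act_asn hasn] using (hD Y rfl hY).symm
    · rw [trGame, if_neg hY, GLG.sem_test_seq_dual_test_glFalse]
      cases Y <;> rfl
  | or φ ψ ihφ ihψ | and φ ψ ihφ ihψ =>
    simp only [MuF.ovars, mem_union, not_or] at hℓ
    have hφ := ihφ hWF.1 hℓ.1 (fun a ha => hind a (Or.inl ha)) hΩ (hD.mono subset_union_left)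
    have hψ := ihψ hWF.2 hℓ.2 (fun a ha => hind a (Or.inr ha)) hΩ (hD.mono subset_union_right)
    simp only [MuF.sem, trGame, GLG.dchoice, GLG.sem, compl_compl, compl_union, hφ, hψ]
  | dia a φ ih =>
    simp only [MuF.sem, trGame, GLG.sem, ih hWF hℓ (fun a ha => hind a (Or.inr ha)) hΩ hD]
  | box a φ ih =>
    ext ω
    simp [MuF.sem, trGame, GLG.sem, ih hWF hℓ (fun a ha => hind a (Or.inr ha)) hΩ hD]
  | mu X φ ih =>
    rw [trGame_sem_mu hasn]
    refine (preimage_update_sInter_prefixed_ite (MuF.sem_modif_mono X φ hWF.1 Ω)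
      (GLG.sem_mono _ Ω) (fun E hE => φ.sem_indep hWF.2 hℓ hind (hΩ.modif X hE))
      fun E hE => ?_).symm
    rw [ih hWF.2 hℓ hind (hΩ.modif X hE)
      ((hD.mono subset_union_right).modif_ite hc hWF.1 hE), trGame_sem_modif φ (by simp [dictUp])]
  | nu X φ ih =>
    rw [trGame_sem_nu hasn]
    refine (preimage_update_sUnion_postfixed_ite (MuF.sem_modif_mono X φ hWF.1 Ω)
      (GLG.sem_mono _ Ω) (fun E hE => φ.sem_indep hWF.2 hℓ hind (hΩ.modif X hE))
      fun E hE => ?_).symm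
    rw [ih hWF.2 hℓ hind (hΩ.modif X hE)
      ((hD.mono subset_union_right).modif_ite hc hWF.1 hE), trGame_sem_modif φ (by simp [dictUp])]

end Counterembedding

/-- Counterembedding: over an assignment structure, for a valuation `Ω`
independent of the control variable `ℓ`, a formula `φ`, a compatible dictionary `ϑ` and a
set `D` satisfying the condition (∗), the μ-calculus semantics of `φ` equals the game
semantics of `φ^ϑ` applied to `D`. -/
theorem counterembedding (L : Language) (𝒳 Act V : Type*)
    [DecidableEq 𝒳] [DecidableEq V]
    (M : Type*) [L.Structure M]
    (tr : Act → (𝒳 → M) → (𝒳 → M) → Prop)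
    -- `L` has deterministic assignments and `M` is an assignment structure:
    (asn : 𝒳 → L.Term 𝒳 → Act)
    (hasn : ∀ (x : 𝒳) (θ : L.Term 𝒳) (ω ν : 𝒳 → M),
      tr (asn x θ) ω ν ↔ ν = Function.update ω x (θ.realize ω))
    (c0 c1 : L.Constants)
    (h01 : ∀ ω : 𝒳 → M, (Language.Constants.term c0 : L.Term 𝒳).realize ω
        ≠ (Language.Constants.term c1 : L.Term 𝒳).realize ω)
    -- distinct constant symbols `c_X` with pairwise distinct interpretations:
    (c : V ⊕ V → L.Constants)
    (hc : ∀ (X Y : V ⊕ V), X ≠ Y → ∀ ω : 𝒳 → M,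
      (Language.Constants.term (c X) : L.Term 𝒳).realize ω
        ≠ (Language.Constants.term (c Y) : L.Term 𝒳).realize ω)
    -- the control variable `ℓ`:
    (ℓ : 𝒳)
    (Ω : V → Set (𝒳 → M)) (hΩ : IndepVal ℓ Ω)
    (φ : MuF L 𝒳 Act V) (hWF : φ.WF) (hBO : φ.BoundOnce)
    (hℓ : ℓ ∉ φ.ovars)
    (hind : ∀ a ∈ φ.acts, IndepAct tr ℓ a)
    (ϑ : V → Bool) (hcomp : Compat ϑ φ)
    (D : Set (𝒳 → M))
    -- the condition (∗):
    (hstar : ∀ X : V ⊕ V, ϑ (unbar X) = true →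
      (GLG.act (asn ℓ (Language.Constants.term (c X))) : GLG L 𝒳 Act V).sem tr Ω D = barVal Ω X) :
    φ.sem tr Ω = (trGame ℓ c asn φ ϑ).sem tr Ω D := by
  have hinj : Function.Injective fun X => (c X : M) := fun X Y h =>
    by_contra fun hne => hc X Y hne (fun _ => c X) (by simpa using h)
  refine φ.sem_eq_trGame_sem hasn hinj hWF hℓ hind hΩ fun X _ hX => ?_
  simpa [GLG.sem_act_asn hasn] using hstar X hX

end GLMu
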